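/- For PSD matrices, if XX^T = Σ and YY^T = Λ with X, Y ∈ Mat(n), and R ∈ O(n) is chosen so that X^T Y = (X^T Λ X)^{1/2} R, then the squared Frobenius distance ‖YR^T − X‖² equals tr(Σ + Λ − 2(X^T Λ X)^{1/2}), which equals the squared Bures-Wasserstein distance between Σ and Λ. -/

import Mathlib

open Matrix

open Classical in
/-- The symmetric PSD square root of a PSD matrix (junk value `0` otherwise). -/
noncomputable def psdSqrt {n : ℕ} (A : Matrix (Fin n) (Fin n) ℝ) : Matrix (Fin n) (Fin n) ℝ :=
  if h : A.PosSemidef then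
    (h.1.eigenvectorUnitary : Matrix (Fin n) (Fin n) ℝ) *
      diagonal ((RCLike.ofReal : ℝ → ℝ) ∘ Real.sqrt ∘ h.1.eigenvalues) *
      (star h.1.eigenvectorUnitary : Matrix (Fin n) (Fin n) ℝ)
  else 0

/-- Frobenius (Euclidean) distance between matrices. -/
noncomputable def frobDist {m k : ℕ} (A B : Matrix (Fin m) (Fin k) ℝ) : ℝ :=
  Real.sqrt (((A - B)ᵀ * (A - B)).trace)

/-!
Expanding the square, `‖Y Rᵀ - X‖² = tr Λ + tr Σ - 2 tr (Xᵀ Y Rᵀ)`, and `Xᵀ Y Rᵀ = (Xᵀ Λ X)^{1/2}`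
because `R` is orthogonal. For the Bures–Wasserstein form, `Xᵀ Λ X = (XᵀY)(XᵀY)ᵀ` and
`Yᵀ Σ Y = (XᵀY)ᵀ(XᵀY)` have the same characteristic polynomial, hence the same eigenvalues, so
their square roots have the same trace; since `Σ = Σ^{1/2} Σ^{1/2}`, the same argument turns
`Yᵀ Σ Y` into `Σ^{1/2} Λ Σ^{1/2}`.
-/

namespace Matrix

variable {𝕜 n : Type*} [RCLike 𝕜] [Fintype n] [DecidableEq n]

theorem IsHermitian.trace_cfc_eq_of_charpoly_eq {A B : Matrix n n 𝕜} (hA : A.IsHermitian)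
    (hB : B.IsHermitian) (h : A.charpoly = B.charpoly) (f : ℝ → ℝ) :
    (cfc f A).trace = (cfc f B).trace := by
  cases isEmpty_or_nonempty n
  · simp [trace]
  rw [trace_eq_neg_charpoly_coeff, trace_eq_neg_charpoly_coeff, hA.charpoly_cfc_eq,
    hB.charpoly_cfc_eq, (hA.eigenvalues_eq_eigenvalues_iff hB).2 h]

theorem trace_cfc_mul_comm {A B : Matrix n n 𝕜} (hAB : (A * B).IsHermitian)
    (hBA : (B * A).IsHermitian) (f : ℝ → ℝ) :
    (cfc f (A * B)).trace = (cfc f (B * A)).trace :=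
  hAB.trace_cfc_eq_of_charpoly_eq hBA (charpoly_mul_comm A B) f

end Matrix

section psdSqrt

variable {n : ℕ}

theorem psdSqrt_eq_cfc {A : Matrix (Fin n) (Fin n) ℝ} (hA : A.PosSemidef) :
    psdSqrt A = cfc Real.sqrt A := by
  rw [psdSqrt, dif_pos hA, hA.1.cfc_eq, IsHermitian.cfc, Unitary.conjStarAlgAut_apply]

open MatrixOrder in
theorem psdSqrt_eq_cfcSqrt {A : Matrix (Fin n) (Fin n) ℝ} (hA : A.PosSemidef) :
    psdSqrt A = CFC.sqrt A := by
  rw [psdSqrt_eq_cfc hA, CFC.sqrt_eq_real_sqrt A (nonneg_iff_posSemidef.2 hA), cfcₙ_eq_cfc]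

theorem frobDist_sq {m k : ℕ} (A B : Matrix (Fin m) (Fin k) ℝ) :
    frobDist A B ^ 2 = (A * Aᵀ).trace + (B * Bᵀ).trace - 2 * (Bᵀ * A).trace := by
  have hnonneg : 0 ≤ ((A - B)ᵀ * (A - B)).trace := by
    simpa using (posSemidef_conjTranspose_mul_self (A - B)).trace_nonneg
  rw [frobDist, Real.sq_sqrt hnonneg, transpose_sub, Matrix.sub_mul, Matrix.mul_sub,
    Matrix.mul_sub, trace_sub, trace_sub, trace_sub, trace_mul_comm Aᵀ A, trace_mul_comm Bᵀ B,
    ← trace_transpose (Aᵀ * B), transpose_mul, transpose_transpose]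
  ring

theorem trace_psdSqrt_mul_transpose_comm (A : Matrix (Fin n) (Fin n) ℝ) :
    (psdSqrt (A * Aᵀ)).trace = (psdSqrt (Aᵀ * A)).trace := by
  have hAAt : (A * Aᵀ).PosSemidef := by simpa using posSemidef_self_mul_conjTranspose A
  have hAtA : (Aᵀ * A).PosSemidef := by simpa using posSemidef_conjTranspose_mul_self A
  rw [psdSqrt_eq_cfc hAAt, psdSqrt_eq_cfc hAtA]
  exact trace_cfc_mul_comm hAAt.1 hAtA.1 _

open MatrixOrder in
theorem transpose_psdSqrt (A : Matrix (Fin n) (Fin n) ℝ) : (psdSqrt A)ᵀ = psdSqrt A := by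
  by_cases hA : A.PosSemidef
  · rw [psdSqrt_eq_cfcSqrt hA, ← conjTranspose_eq_transpose_of_trivial]
    exact (nonneg_iff_posSemidef.1 (CFC.sqrt_nonneg A)).isHermitian.eq
  · simp [psdSqrt, hA]

open MatrixOrder in
theorem psdSqrt_mul_self {A : Matrix (Fin n) (Fin n) ℝ} (hA : A.PosSemidef) :
    psdSqrt A * psdSqrt A = A := by
  rw [psdSqrt_eq_cfcSqrt hA, CFC.sqrt_mul_sqrt_self A (nonneg_iff_posSemidef.2 hA)]

theorem trace_psdSqrt_transpose_mul_mul_comm (X Y : Matrix (Fin n) (Fin n) ℝ) :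
    (psdSqrt (Xᵀ * (Y * Yᵀ) * X)).trace = (psdSqrt (Yᵀ * (X * Xᵀ) * Y)).trace := by
  simpa only [transpose_mul, transpose_transpose, Matrix.mul_assoc] using
    trace_psdSqrt_mul_transpose_comm (Xᵀ * Y)

theorem trace_psdSqrt_transpose_mul_mul_congr {X B : Matrix (Fin n) (Fin n) ℝ}
    (h : X * Xᵀ = B * Bᵀ) (Y : Matrix (Fin n) (Fin n) ℝ) :
    (psdSqrt (Xᵀ * (Y * Yᵀ) * X)).trace = (psdSqrt (Bᵀ * (Y * Yᵀ) * B)).trace := by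
  rw [trace_psdSqrt_transpose_mul_mul_comm, h, ← trace_psdSqrt_transpose_mul_mul_comm]

end psdSqrt

theorem squared_frobDist_eq_squared_buresWasserstein (n : ℕ)
    (X Y R : Matrix (Fin n) (Fin n) ℝ) (hR : Rᵀ * R = 1)
    (hXY : Xᵀ * Y = psdSqrt (Xᵀ * (Y * Yᵀ) * X) * R) :
    frobDist (Y * Rᵀ) X ^ 2
        = (X * Xᵀ + Y * Yᵀ - 2 • psdSqrt (Xᵀ * (Y * Yᵀ) * X)).trace ∧
    frobDist (Y * Rᵀ) X ^ 2
        = (X * Xᵀ + Y * Yᵀ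
            - 2 • psdSqrt (psdSqrt (X * Xᵀ) * (Y * Yᵀ) * psdSqrt (X * Xᵀ))).trace := by
  have hYYt : Y * Rᵀ * (Y * Rᵀ)ᵀ = Y * Yᵀ := by
    rw [transpose_mul, transpose_transpose, Matrix.mul_assoc, ← Matrix.mul_assoc Rᵀ, hR,
      Matrix.one_mul]
  have hS : Xᵀ * (Y * Rᵀ) = psdSqrt (Xᵀ * (Y * Yᵀ) * X) := by
    rw [← Matrix.mul_assoc, hXY, Matrix.mul_assoc, mul_eq_one_comm.mp hR, Matrix.mul_one]
  have hXXt : X * Xᵀ = psdSqrt (X * Xᵀ) * (psdSqrt (X * Xᵀ))ᵀ := by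
    rw [transpose_psdSqrt, psdSqrt_mul_self (by simpa using posSemidef_self_mul_conjTranspose X)]
  have hbw := trace_psdSqrt_transpose_mul_mul_congr hXXt Y
  rw [transpose_psdSqrt] at hbw
  rw [frobDist_sq, hYYt, hS]
  simp only [trace_sub, trace_add, trace_smul, hbw]
  constructor <;> ring
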